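/- arXiv:2310.02036 — 5 statements merged into one kernel-verified Lean document; each statement's English description precedes it below -/
import Mathlib

section
/- Let $q$ be a positive integer and $M$ an $n \times n$ matrix with integer entries and nonzero determinant. Then the cardinality of the kernel of $M$ viewed as a map from $(\mathbb{Z}/q\mathbb{Z})^n$ to itself divides $\det M$. -/
/-!
For an endomorphism of a finite abelian group, the kernel and the cokernel have the same order.
The cokernel of `M` on `(ℤ/qℤ)ⁿ` is `ℤⁿ / (M ℤⁿ + q ℤⁿ)`, a quotient of `ℤⁿ / M ℤⁿ`, and the latter
has order `|det M|` by the Smith normal form.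
-/

open Matrix

theorem Matrix.index_range_mulVecLin {ι : Type*} [Fintype ι] [DecidableEq ι]
    (M : Matrix ι ι ℤ) (hM : M.det ≠ 0) :
    (LinearMap.range M.mulVecLin).toAddSubgroup.index = M.det.natAbs := by
  have hinj : Function.Injective M.mulVecLin := mulVec_injective_of_det_ne_zero hM
  refine (Submodule.natAbs_det_equiv _ (LinearEquiv.ofInjective _ hinj)).symm.trans ?_
  rw [← LinearMap.det_toLin' M]
  rfl

theorem AddMonoidHom.card_ker_dvd_index_range_of_semiconj {G H : Type*} [AddCommGroup G]
    [Finite G] [AddCommGroup H] {f : G →+ G} {g : H →+ H} {π : H →+ G}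
    (hπ : Function.Surjective π) (h : ∀ x, π (g x) = f (π x)) :
    Nat.card f.ker ∣ g.range.index := by
  rw [← AddSubgroup.index_range, ← AddSubgroup.index_comap_of_surjective _ hπ]
  apply AddSubgroup.index_dvd_of_le
  rintro _ ⟨x, rfl⟩
  exact ⟨π x, (h x).symm⟩

theorem kernel_card_dvd_det (n q : ℕ) (hq : 0 < q)
    (M : Matrix (Fin n) (Fin n) ℤ) (hM : M.det ≠ 0) :
    (Nat.card {x : Fin n → ZMod q // (M.map (Int.cast : ℤ → ZMod q)).mulVec x = 0} : ℤ) ∣ M.det := by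
  have : NeZero q := ⟨hq.ne'⟩
  have hdvd := AddMonoidHom.card_ker_dvd_index_range_of_semiconj
    (f := (M.map (Int.cast : ℤ → ZMod q)).mulVecLin.toAddMonoidHom)
    (g := M.mulVecLin.toAddMonoidHom)
    (π := (Int.castAddHom (ZMod q)).compLeft (Fin n))
    ZMod.intCast_surjective.comp_left
    (fun v => funext fun i => (Int.castRingHom (ZMod q)).map_mulVec M v i)
  rw [← LinearMap.range_toAddSubgroup, M.index_range_mulVecLin hM] at hdvd
  exact Int.natCast_dvd.mpr hdvd
end

section
/- Let $p$ be a prime, $n$ a positive integer, and $M$ an $n \times n$ integer matrix whose reduction modulo $p$ has rank at most $n - r$ over $\mathbb{F}_p$. Then $p^r$ divides $\det M$. -/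
theorem prime_pow_dvd_det_of_low_rank (p n r : ℕ) (hp : p.Prime) (hn : 0 < n) (hr : r ≤ n)
    (M : Matrix (Fin n) (Fin n) ℤ)
    (hrank : (M.map (Int.cast : ℤ → ZMod p)).rank ≤ n - r) :
    (p : ℤ) ^ r ∣ M.det := by
  haveI : Fact p.Prime := ⟨hp⟩
  set Mb : Matrix (Fin n) (Fin n) (ZMod p) := M.map (Int.cast : ℤ → ZMod p) with hMb
  set K : Submodule (ZMod p) (Fin n → ZMod p) := LinearMap.ker Mb.mulVecLin with hK
  -- finrank of kernel is at least r
  have hsum := LinearMap.finrank_range_add_finrank_ker Mb.mulVecLin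
  rw [Module.finrank_fin_fun] at hsum
  have hrank' : Mb.rank = Module.finrank (ZMod p) (LinearMap.range Mb.mulVecLin) := rfl
  have hd : r ≤ Module.finrank (ZMod p) K := by
    rw [hrank'] at hrank
    show r ≤ Module.finrank (ZMod p) (LinearMap.ker Mb.mulVecLin)
    omega
  obtain ⟨W, hW⟩ := Submodule.exists_isCompl K
  set d := Module.finrank (ZMod p) K with hdK
  set d' := Module.finrank (ZMod p) W with hdW
  have hdd' : d + d' = n := by
    have := Submodule.finrank_add_eq_of_isCompl hW
    rwa [Module.finrank_fin_fun] at this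
  let b1 : Module.Basis (Fin d) (ZMod p) K := Module.finBasis (ZMod p) K
  let b2 : Module.Basis (Fin d') (ZMod p) W := Module.finBasis (ZMod p) W
  let e : (K × W) ≃ₗ[ZMod p] (Fin n → ZMod p) := Submodule.prodEquivOfIsCompl K W hW
  let b : Module.Basis (Fin n) (ZMod p) (Fin n → ZMod p) :=
    (((b1.prod b2).map e).reindex (finSumFinEquiv.trans (finCongr hdd')))
  have hbK : ∀ j : Fin n, (j : ℕ) < r → b j ∈ K := by
    intro j hj
    have hjd : (j : ℕ) < d := lt_of_lt_of_le hj hd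
    have hjeq : (finSumFinEquiv.trans (finCongr hdd')).symm j
        = Sum.inl (⟨(j : ℕ), hjd⟩ : Fin d) := by
      apply (finSumFinEquiv.trans (finCongr hdd')).injective
      simp [finCongr, Fin.ext_iff]
    have : b j = e ((b1.prod b2) (Sum.inl ⟨(j : ℕ), hjd⟩)) := by
      show (((b1.prod b2).map e).reindex (finSumFinEquiv.trans (finCongr hdd'))) j = _
      rw [Module.Basis.reindex_apply, hjeq, Module.Basis.map_apply]
    rw [this]
    have hpr : (b1.prod b2) (Sum.inl (⟨(j : ℕ), hjd⟩ : Fin d))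
        = (b1 ⟨(j : ℕ), hjd⟩, (0 : W)) := by
      exact Prod.ext (Module.Basis.prod_apply_inl_fst _ _ _) (Module.Basis.prod_apply_inl_snd _ _ _)
    rw [hpr, Submodule.coe_prodEquivOfIsCompl']
    simp [K]
  -- lift to an integer matrix B
  let B : Matrix (Fin n) (Fin n) ℤ := Matrix.of fun i j => ((b j i).val : ℤ)
  have hBmap : B.map (Int.cast : ℤ → ZMod p) = Matrix.of fun i j => b j i := by
    ext i j
    simp [B, ZMod.natCast_val, ZMod.cast_id]
  -- det B is not divisible by p
  have hdetB : ¬ ((p : ℤ) ∣ B.det) := by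
    intro hdvd
    rw [← ZMod.intCast_zmod_eq_zero_iff_dvd] at hdvd
    have hdvd' : (B.map (Int.cast : ℤ → ZMod p)).det = 0 := by
      rw [← hdvd]
      exact (RingHom.map_det (Int.castRingHom (ZMod p)) B).symm
    have : (B.map (Int.cast : ℤ → ZMod p)).det ≠ 0 := by
      rw [hBmap]
      have : (Matrix.of fun i j => b j i) = (Pi.basisFun (ZMod p) (Fin n)).toMatrix b := by
        ext i j
        simp [Module.Basis.toMatrix_apply]
      rw [this, ← Module.Basis.det_apply]
      exact ((Pi.basisFun (ZMod p) (Fin n)).isUnit_det b).ne_zero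
    exact this hdvd'
  -- the first r columns of M * B are divisible by p
  have hcol : ∀ i (j : Fin n), (j : ℕ) < r → (p : ℤ) ∣ (M * B) i j := by
    intro i j hj
    rw [← ZMod.intCast_zmod_eq_zero_iff_dvd]
    have : (((M * B) i j : ℤ) : ZMod p) = (Mb * (B.map (Int.cast : ℤ → ZMod p))) i j := by
      simp [Matrix.mul_apply, Mb, Matrix.map_apply]
    rw [this, hBmap]
    have : (Mb * (Matrix.of fun i j => b j i)) i j = Mb.mulVecLin (b j) i := by
      simp [Matrix.mul_apply, Matrix.mulVecLin_apply, Matrix.mulVec, dotProduct]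
    rw [this]
    have := hbK j hj
    rw [hK, LinearMap.mem_ker] at this
    rw [this]
    rfl
  -- factor p^r out of det (M * B)
  let v : Fin n → ℤ := fun j => if (j : ℕ) < r then (p : ℤ) else 1
  let N : Matrix (Fin n) (Fin n) ℤ :=
    Matrix.of fun i j => if (j : ℕ) < r then (M * B) i j / p else (M * B) i j
  have hMBN : M * B = Matrix.of fun i j => v j * N i j := by
    ext i j
    by_cases hj : (j : ℕ) < r
    · simp only [Matrix.of_apply, v, N, if_pos hj]
      exact (Int.mul_ediv_cancel' (hcol i j hj)).symm
    · simp [v, N, if_neg hj]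
  have hprod : (∏ j : Fin n, v j) = (p : ℤ) ^ r := by
    simp only [v]
    rw [Finset.prod_ite, Finset.prod_const, Finset.prod_const, one_pow, mul_one]
    congr 1
    have e2 : {j : Fin n // (j : ℕ) < r} ≃ Fin r :=
      { toFun := fun j => ⟨((j : Fin n) : ℕ), j.2⟩
        invFun := fun i => ⟨⟨(i : ℕ), lt_of_lt_of_le i.2 hr⟩, i.2⟩
        left_inv := fun j => Subtype.ext (Fin.ext rfl)
        right_inv := fun i => rfl }
    have h1 := Fintype.card_subtype (fun j : Fin n => (j : ℕ) < r)
    have h2 := Fintype.card_congr e2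
    rw [Fintype.card_fin] at h2
    omega
  have hdet : M.det * B.det = (p : ℤ) ^ r * N.det := by
    rw [← Matrix.det_mul, hMBN, Matrix.det_mul_row, hprod]
  have hdvd : (p : ℤ) ^ r ∣ M.det * B.det := ⟨N.det, hdet⟩
  exact (Nat.prime_iff_prime_int.mp hp).pow_dvd_of_dvd_mul_right r hdetB hdvd
end

section
/- Let $L$ be a symmetric real $n \times n$ matrix, $P \ge 1$, and suppose $\mathbf{x}, \mathbf{y} \in \mathbb{Z}^n$ satisfy $|\mathbf{x}|, |\mathbf{y}| \le P$ and $\|L_i(\mathbf{x})\| < \tfrac{1}{2nP}$, $\|L_i(\mathbf{y})\| < \tfrac{1}{2nP}$ for all $i$, where $L_i$ denotes the $i$-th row of $L$ as a linear form. Let $[z]$ denote the integer nearest to $z$. Then $\mathbf{y} \cdot ([L_i(\mathbf{x})])_{i} = \mathbf{x} \cdot ([L_i(\mathbf{y})])_{i}$. -/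
theorem rounded_symmetry (n : ℕ) (L : Matrix (Fin n) (Fin n) ℝ) (hL : L.IsSymm)
    (P : ℝ) (hP : 1 ≤ P) (x y : Fin n → ℤ)
    (hx : ∀ i, |(x i : ℝ)| ≤ P) (hy : ∀ i, |(y i : ℝ)| ≤ P)
    (hLx : ∀ i, |(∑ j, L i j * (x j : ℝ)) - round (∑ j, L i j * (x j : ℝ))| < 1 / (2 * n * P))
    (hLy : ∀ i, |(∑ j, L i j * (y j : ℝ)) - round (∑ j, L i j * (y j : ℝ))| < 1 / (2 * n * P)) :
    ∑ i, y i * round (∑ j, L i j * (x j : ℝ))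
      = ∑ i, x i * round (∑ j, L i j * (y j : ℝ)) := by
  rcases Nat.eq_zero_or_pos n with hn | hn
  · subst hn; simp
  have hP0 : (0:ℝ) < P := lt_of_lt_of_le zero_lt_one hP
  have hn0 : (0:ℝ) < n := by exact_mod_cast hn
  have hsym : ∑ i, (y i : ℝ) * (∑ j, L i j * (x j:ℝ))
      = ∑ i, (x i : ℝ) * (∑ j, L i j * (y j:ℝ)) := by
    simp_rw [Finset.mul_sum]
    rw [Finset.sum_comm]
    refine Finset.sum_congr rfl fun i _ => Finset.sum_congr rfl fun j _ => ?_
    have := congrFun (congrFun hL j) i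
    simp only [Matrix.transpose_apply] at this
    rw [this]; ring
  have bound : ∀ (u v : Fin n → ℤ), (∀ i, |(u i : ℝ)| ≤ P) →
      (∀ i, |(∑ j, L i j * (v j : ℝ)) - round (∑ j, L i j * (v j : ℝ))| < 1 / (2 * n * P)) →
      ∑ i, |(u i : ℝ) * ((∑ j, L i j * (v j:ℝ)) - round (∑ j, L i j * (v j:ℝ)))| < 1/2 := by
    intro u v hu hv
    have : ∀ i ∈ Finset.univ, |(u i : ℝ) * ((∑ j, L i j * (v j:ℝ)) - round (∑ j, L i j * (v j:ℝ)))|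
        < 1 / (2 * n) := by
      intro i _
      rw [abs_mul]
      calc |(u i:ℝ)| * |(∑ j, L i j * (v j:ℝ)) - round (∑ j, L i j * (v j:ℝ))|
          ≤ P * |(∑ j, L i j * (v j:ℝ)) - round (∑ j, L i j * (v j:ℝ))| :=
            mul_le_mul_of_nonneg_right (hu i) (abs_nonneg _)
        _ < P * (1 / (2 * n * P)) := mul_lt_mul_of_pos_left (hv i) hP0
        _ = 1 / (2 * n) := by field_simp
    calc ∑ i, |(u i : ℝ) * ((∑ j, L i j * (v j:ℝ)) - round (∑ j, L i j * (v j:ℝ)))|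
        < ∑ _i : Fin n, 1 / (2 * (n:ℝ)) :=
          Finset.sum_lt_sum_of_nonempty (Finset.univ_nonempty_iff.mpr (Fin.pos_iff_nonempty.mp hn)) this
      _ = 1/2 := by
          rw [Finset.sum_const, Finset.card_univ, Fintype.card_fin, nsmul_eq_mul]
          field_simp
  have key : |((∑ i, y i * round (∑ j, L i j * (x j:ℝ)) : ℤ) : ℝ)
      - ((∑ i, x i * round (∑ j, L i j * (y j:ℝ)) : ℤ) : ℝ)| < 1 := by
    push_cast
    have hrepr : (∑ i, (y i:ℝ) * (round (∑ j, L i j * (x j:ℝ)) : ℤ))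
        - (∑ i, (x i:ℝ) * (round (∑ j, L i j * (y j:ℝ)) : ℤ))
        = (∑ i, (x i:ℝ) * ((∑ j, L i j * (y j:ℝ)) - round (∑ j, L i j * (y j:ℝ))))
          - (∑ i, (y i:ℝ) * ((∑ j, L i j * (x j:ℝ)) - round (∑ j, L i j * (x j:ℝ)))) := by
      have e1 : ∀ i : Fin n, (y i:ℝ) * (round (∑ j, L i j * (x j:ℝ)) : ℤ)
          = (y i:ℝ) * (∑ j, L i j * (x j:ℝ))
            - (y i:ℝ) * ((∑ j, L i j * (x j:ℝ)) - round (∑ j, L i j * (x j:ℝ))) := by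
        intro i; ring
      have e2 : ∀ i : Fin n, (x i:ℝ) * (round (∑ j, L i j * (y j:ℝ)) : ℤ)
          = (x i:ℝ) * (∑ j, L i j * (y j:ℝ))
            - (x i:ℝ) * ((∑ j, L i j * (y j:ℝ)) - round (∑ j, L i j * (y j:ℝ))) := by
        intro i; ring
      simp_rw [e1, e2, Finset.sum_sub_distrib, hsym]
      ring
    rw [hrepr]
    calc |(∑ i, (x i:ℝ) * ((∑ j, L i j * (y j:ℝ)) - round (∑ j, L i j * (y j:ℝ))))
          - (∑ i, (y i:ℝ) * ((∑ j, L i j * (x j:ℝ)) - round (∑ j, L i j * (x j:ℝ))))|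
        ≤ |∑ i, (x i:ℝ) * ((∑ j, L i j * (y j:ℝ)) - round (∑ j, L i j * (y j:ℝ)))|
          + |∑ i, (y i:ℝ) * ((∑ j, L i j * (x j:ℝ)) - round (∑ j, L i j * (x j:ℝ)))| :=
          abs_sub _ _
      _ ≤ (∑ i, |(x i:ℝ) * ((∑ j, L i j * (y j:ℝ)) - round (∑ j, L i j * (y j:ℝ)))|)
          + ∑ i, |(y i:ℝ) * ((∑ j, L i j * (x j:ℝ)) - round (∑ j, L i j * (x j:ℝ)))| :=
          add_le_add (Finset.abs_sum_le_sum_abs _ _) (Finset.abs_sum_le_sum_abs _ _)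
      _ < 1/2 + 1/2 := add_lt_add (bound x y hx hLy) (bound y x hy hLx)
      _ = 1 := by norm_num
  have keyZ : |(∑ i, y i * round (∑ j, L i j * (x j:ℝ)))
      - ∑ i, x i * round (∑ j, L i j * (y j:ℝ))| < 1 := by exact_mod_cast key
  rw [abs_lt] at keyZ; omega
end

section
/- Let $q \ge 2$ be an integer, $L$ a symmetric real $n \times n$ matrix with rows $L_i$, $P \ge 1$. Suppose $\mathbf{x}_1, \mathbf{x}_2 \in \mathbb{Z}^n$ both satisfy $|\mathbf{x}_j| \le P$ and $\|L_i(\mathbf{x}_j)\| < \tfrac{1}{2nP}$ for all $i$, and moreover $\mathbf{x}_1 \equiv \mathbf{x}_2 \pmod q$ componentwise and $[L_i(\mathbf{x}_1)] \equiv [L_i(\mathbf{x}_2)] \pmod q$ for all $i$, where $[z]$ is the nearest integer to $z$. Then $\mathbf{x} := (\mathbf{x}_2 - \mathbf{x}_1)/q$ is an integer vector with $|\mathbf{x}| \le 2P/q$ and $\|L_i(\mathbf{x})\| < \tfrac{1}{nqP}$ for all $i$. -/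
/-!
Dividing `x₂ - x₁` by `q` divides every coordinate and every linear form `Lᵢ` by `q`.
The coordinate bound is then the triangle inequality. For the linear forms, the
congruence of the nearest integers makes `([Lᵢ x₂] - [Lᵢ x₁]) / q` an integer, whose
distance to `Lᵢ x` is the difference of the two rounding errors divided by `q`.
-/

section

variable {α : Type*} [Field α] [LinearOrder α] [IsStrictOrderedRing α]

theorem abs_sub_div_le_two_mul_div {a b P q : α} (ha : |a| ≤ P) (hb : |b| ≤ P) (hq : 0 ≤ q) :
    |(b - a) / q| ≤ 2 * P / q := by
  rw [abs_div, abs_of_nonneg hq]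
  gcongr
  linarith [abs_sub b a]

theorem Finset.sum_mul_sub_div {ι : Type*} (s : Finset ι) (a u v : ι → α) (q : α) :
    ∑ j ∈ s, a j * ((u j - v j) / q) = (∑ j ∈ s, a j * u j - ∑ j ∈ s, a j * v j) / q := by
  rw [← Finset.sum_sub_distrib, Finset.sum_div]
  exact Finset.sum_congr rfl fun j _ => by ring

variable [FloorRing α]

theorem abs_sub_round_div_lt {s₁ s₂ ε : α} {q : ℕ} (hq : 0 < q)
    (hdvd : (q : ℤ) ∣ round s₂ - round s₁)
    (h₁ : |s₁ - round s₁| < ε) (h₂ : |s₂ - round s₂| < ε) :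
    |(s₂ - s₁) / q - round ((s₂ - s₁) / q)| < 2 * ε / q := by
  obtain ⟨c, hc⟩ := hdvd
  have hq' : (0 : α) < q := by exact_mod_cast hq
  have hc' : (round s₂ : α) - round s₁ = q * c := by exact_mod_cast hc
  have hdiff : (s₂ - s₁) / q - c = ((s₂ - round s₂) - (s₁ - round s₁)) / q := by
    field_simp
    linarith
  calc |(s₂ - s₁) / q - round ((s₂ - s₁) / q)| ≤ |(s₂ - s₁) / q - c| := round_le _ c
    _ = |(s₂ - round s₂) - (s₁ - round s₁)| / q := by rw [hdiff, abs_div, abs_of_pos hq']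
    _ < 2 * ε / q := by
      gcongr
      linarith [abs_sub (s₂ - round s₂) (s₁ - round s₁)]

end

theorem shrunk_vector_properties_general (n q : ℕ) (hq : 2 ≤ q)
    (L : Matrix (Fin n) (Fin n) ℝ) (P : ℝ)
    (x₁ x₂ : Fin n → ℤ)
    (hx₁ : ∀ i, |(x₁ i : ℝ)| ≤ P) (hx₂ : ∀ i, |(x₂ i : ℝ)| ≤ P)
    (hL₁ : ∀ i, |(∑ j, L i j * (x₁ j : ℝ)) - round (∑ j, L i j * (x₁ j : ℝ))| < 1 / (2 * n * P))
    (hL₂ : ∀ i, |(∑ j, L i j * (x₂ j : ℝ)) - round (∑ j, L i j * (x₂ j : ℝ))| < 1 / (2 * n * P))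
    (hcong : ∀ i, (q : ℤ) ∣ (x₂ i - x₁ i))
    (hcong' : ∀ i, (q : ℤ) ∣ (round (∑ j, L i j * (x₂ j : ℝ)) - round (∑ j, L i j * (x₁ j : ℝ)))) :
    (∀ i, |(((x₂ i - x₁ i) / q : ℤ) : ℝ)| ≤ 2 * P / q) ∧
      ∀ i, |(∑ j, L i j * (((x₂ j - x₁ j) / q : ℤ) : ℝ))
          - round (∑ j, L i j * (((x₂ j - x₁ j) / q : ℤ) : ℝ))| < 1 / (n * q * P) := by
  have hq₀ : 0 < q := by omega
  have hx : ∀ j, (((x₂ j - x₁ j) / q : ℤ) : ℝ) = ((x₂ j : ℝ) - x₁ j) / q := fun j => by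
    rw [Int.cast_div (hcong j) (by exact_mod_cast hq₀.ne')]
    push_cast
    rfl
  simp only [hx, Finset.sum_mul_sub_div]
  refine ⟨fun i => abs_sub_div_le_two_mul_div (hx₁ i) (hx₂ i) (Nat.cast_nonneg q), fun i => ?_⟩
  calc _ < 2 * (1 / (2 * n * P)) / q := abs_sub_round_div_lt hq₀ (hcong' i) (hL₁ i) (hL₂ i)
    _ = 1 / (n * q * P) := by ring

theorem shrunk_vector_properties (n q : ℕ) (hq : 2 ≤ q)
    (L : Matrix (Fin n) (Fin n) ℝ) (hL : L.IsSymm) (P : ℝ) (hP : 1 ≤ P)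
    (x₁ x₂ : Fin n → ℤ)
    (hx₁ : ∀ i, |(x₁ i : ℝ)| ≤ P) (hx₂ : ∀ i, |(x₂ i : ℝ)| ≤ P)
    (hL₁ : ∀ i, |(∑ j, L i j * (x₁ j : ℝ)) - round (∑ j, L i j * (x₁ j : ℝ))| < 1 / (2 * n * P))
    (hL₂ : ∀ i, |(∑ j, L i j * (x₂ j : ℝ)) - round (∑ j, L i j * (x₂ j : ℝ))| < 1 / (2 * n * P))
    (hcong : ∀ i, (q : ℤ) ∣ (x₂ i - x₁ i))
    (hcong' : ∀ i, (q : ℤ) ∣ (round (∑ j, L i j * (x₂ j : ℝ)) - round (∑ j, L i j * (x₁ j : ℝ)))) :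
    (∀ i, |(((x₂ i - x₁ i) / q : ℤ) : ℝ)| ≤ 2 * P / q) ∧
      ∀ i, |(∑ j, L i j * (((x₂ j - x₁ j) / q : ℤ) : ℝ))
          - round (∑ j, L i j * (((x₂ j - x₁ j) / q : ℤ) : ℝ))| < 1 / (n * q * P) :=
  shrunk_vector_properties_general n q hq L P x₁ x₂ hx₁ hx₂ hL₁ hL₂ hcong hcong'
end

section
/- Let $M$ be an $n \times n$ integer matrix of rank $r$ over $\mathbb{Q}$ (with $r \ge 1$), and let $p$ be a prime. Then $p^{\,r - r_p(M)}$ divides some nonzero $r \times r$ minor of $M$, where $r_p(M)$ is the rank of $M$ over $\mathbb{F}_p$. -/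
/-!
Over `ℚ`, `M` has a nonsingular `r × r` submatrix `A`, and the rank of `A` modulo `p` is at most
that of `M`, so it suffices to show that `p ^ dim ker (A mod p)` divides `det A`.
Given a kernel vector mod `p` with `i`-th coordinate `1`, lift it to an integer vector `x` with
`x i = 1`; then `A x = p w`, and replacing column `i` of `A` by `w` divides the determinant by
`p` while losing at most one dimension of the kernel mod `p`.
-/

open Matrix Module

namespace Matrix

variable {K : Type*} [Field K]

lemma exists_linearIndependent_cols {m n : Type*} [Fintype n] (A : Matrix m n K) {r : ℕ}
    (hA : A.rank = r) :
    ∃ cols : Fin r → n, Function.Injective cols ∧ LinearIndependent K (A.col ∘ cols) := by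
  obtain ⟨κ, a, ha, hspan, hli⟩ := exists_linearIndependent' K A.col
  have : Fintype κ := Fintype.ofInjective a ha
  have hcard : Fintype.card κ = r := by
    rw [← hA, rank_eq_finrank_span_cols, ← hspan, finrank_span_eq_card hli]
  let e : Fin r ≃ κ := (Fintype.equivFinOfCardEq hcard).symm
  exact ⟨a ∘ e, ha.comp e.injective, hli.comp e e.injective⟩

lemma exists_submatrix_det_ne_zero {m n : Type*} [Fintype m] [Fintype n] (A : Matrix m n K)
    {r : ℕ} (hA : A.rank = r) :
    ∃ (rows : Fin r → m) (cols : Fin r → n), Function.Injective rows ∧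
      Function.Injective cols ∧ (A.submatrix rows cols).det ≠ 0 := by
  obtain ⟨cols, hcols, hli⟩ := exists_linearIndependent_cols A hA
  have hrank : (A.submatrix id cols)ᵀ.rank = r := by
    simpa using LinearIndependent.rank_matrix (M := (A.submatrix id cols)ᵀ) hli
  obtain ⟨rows, hrows, hli'⟩ := exists_linearIndependent_cols _ hrank
  refine ⟨rows, cols, hrows, hcols, ?_⟩
  have : IsUnit (A.submatrix rows cols) := linearIndependent_rows_iff_isUnit.mp hli'
  exact ((isUnit_iff_isUnit_det _).mp this).ne_zero

end Matrix

lemma Submodule.finrank_le_finrank_inf_ker_add_one {K V : Type*} [Field K] [AddCommGroup V]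
    [Module K V] [FiniteDimensional K V] (W : Submodule K V) (f : V →ₗ[K] K) :
    finrank K W ≤ finrank K ↥(W ⊓ LinearMap.ker f) + 1 := by
  have hsum := Submodule.finrank_sup_add_finrank_inf_eq W (LinearMap.ker f)
  have hsup := Submodule.finrank_le (W ⊔ LinearMap.ker f)
  have hker := LinearMap.finrank_range_add_finrank_ker f
  have hrange := Submodule.finrank_le (LinearMap.range f)
  rw [finrank_self] at hrange
  omega

namespace Matrix

variable {ι R : Type*} [Fintype ι] [DecidableEq ι] [CommRing R]

lemma det_eq_mul_det_updateCol {A : Matrix ι ι R} {x w : ι → R} {c : R} {i : ι}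
    (hx : x i = 1) (h : A *ᵥ x = c • w) : A.det = c * (A.updateCol i w).det := by
  have hcramer := congrFun (cramer_eq_adjugate_mulVec A (A *ᵥ x)) i
  rw [mulVec_mulVec, adjugate_mul, smul_mulVec, one_mulVec, Pi.smul_apply, hx, smul_eq_mul,
    mul_one, cramer_apply, h, det_updateCol_smul] at hcramer
  exact hcramer.symm

lemma updateCol_mulVec_of_apply_eq_zero {m α : Type*} [NonUnitalNonAssocSemiring α]
    (A : Matrix m ι α) (i : ι) (w : m → α) {x : ι → α} (hx : x i = 0) :
    A.updateCol i w *ᵥ x = A *ᵥ x := by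
  ext k
  refine Finset.sum_congr rfl fun j _ => ?_
  by_cases hj : j = i
  · subst hj; simp [hx]
  · simp [updateCol_ne hj]

variable {K : Type*} [Field K] (π : R →+* K) (hπ : Function.Surjective π)
  {p : R} (hp : ∀ a, π a = 0 → p ∣ a)
include hπ hp

lemma pow_dvd_det_of_le_finrank_ker (d : ℕ) (A : Matrix ι ι R)
    (hd : d ≤ finrank K (LinearMap.ker (A.map π).mulVecLin)) : p ^ d ∣ A.det := by
  induction d generalizing A with
  | zero => simp
  | succ d ih =>
    obtain ⟨v, hv, hv0⟩ := Submodule.exists_mem_ne_zero_of_ne_bot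
      (Submodule.one_le_finrank_iff.mp ((Nat.le_add_left 1 d).trans hd))
    obtain ⟨i, hvi⟩ : ∃ i, v i ≠ 0 := Function.ne_iff.mp hv0
    choose y hy using fun j => hπ ((v i)⁻¹ * v j)
    set x := Function.update y i 1
    have hxi : x i = 1 := Function.update_self ..
    have hπx : π ∘ x = (v i)⁻¹ • v := by
      ext j
      by_cases hj : j = i
      · subst hj; simp [x, hvi]
      · simp [x, hj, hy]
    have hdvd : ∀ k, p ∣ (A *ᵥ x) k := fun k => hp _ <| by
      rw [RingHom.map_mulVec, hπx, mulVec_smul]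
      have hAv : A.map π *ᵥ v = 0 := hv
      simp [hAv]
    choose w hw using hdvd
    have hdet := det_eq_mul_det_updateCol hxi (funext hw : A *ᵥ x = p • w)
    let proj_i : (ι → K) →ₗ[K] K := LinearMap.proj i
    have hker : LinearMap.ker (A.map π).mulVecLin ⊓ LinearMap.ker proj_i ≤
        LinearMap.ker ((A.updateCol i w).map π).mulVecLin := by
      rintro z ⟨hz : A.map π *ᵥ z = 0, hzi : z i = 0⟩
      change (A.updateCol i w).map π *ᵥ z = 0
      rw [map_updateCol, updateCol_mulVec_of_apply_eq_zero _ _ _ hzi, hz]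
    have hfinrank := (Submodule.finrank_le_finrank_inf_ker_add_one _ proj_i).trans
      (Nat.add_le_add_right (Submodule.finrank_mono hker) 1)
    rw [hdet, pow_succ']
    exact mul_dvd_mul_left p (ih _ (by omega))

lemma pow_card_sub_rank_dvd_det (A : Matrix ι ι R) :
    p ^ (Fintype.card ι - (A.map π).rank) ∣ A.det := by
  refine pow_dvd_det_of_le_finrank_ker π hπ hp _ A ?_
  have := LinearMap.finrank_range_add_finrank_ker (A.map π).mulVecLin
  rw [finrank_fintype_fun_eq_card] at this
  rw [rank]
  omega

end Matrix

theorem prime_pow_dvd_minor_general (n r : ℕ) (p : ℕ) (hp : p.Prime)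
    (M : Matrix (Fin n) (Fin n) ℤ)
    (hrank : (M.map (Int.cast : ℤ → ℚ)).rank = r) :
    ∃ rows cols : Fin r → Fin n, Function.Injective rows ∧ Function.Injective cols ∧
      (M.submatrix rows cols).det ≠ 0 ∧
      (p : ℤ) ^ (r - (M.map (Int.cast : ℤ → ZMod p)).rank) ∣ (M.submatrix rows cols).det := by
  have : Fact p.Prime := ⟨hp⟩
  obtain ⟨rows, cols, hrows, hcols, hdet⟩ := exists_submatrix_det_ne_zero _ hrank
  refine ⟨rows, cols, hrows, hcols, fun h => hdet ?_, ?_⟩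
  · have hcast := RingHom.map_det (Int.castRingHom ℚ) (M.submatrix rows cols)
    rw [h, map_zero] at hcast
    exact hcast.symm
  · have hdvd := pow_card_sub_rank_dvd_det (Int.castRingHom (ZMod p)) ZMod.intCast_surjective
      (fun a => (ZMod.intCast_zmod_eq_zero_iff_dvd a p).mp) (M.submatrix rows cols)
    rw [Fintype.card_fin] at hdvd
    exact (pow_dvd_pow _ (Nat.sub_le_sub_left (rank_submatrix_le _ rows cols) r)).trans hdvd

theorem prime_pow_dvd_minor (n r : ℕ) (hr : 1 ≤ r) (p : ℕ) (hp : p.Prime)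
    (M : Matrix (Fin n) (Fin n) ℤ)
    (hrank : (M.map (Int.cast : ℤ → ℚ)).rank = r) :
    ∃ rows cols : Fin r → Fin n, Function.Injective rows ∧ Function.Injective cols ∧
      (M.submatrix rows cols).det ≠ 0 ∧
      (p : ℤ) ^ (r - (M.map (Int.cast : ℤ → ZMod p)).rank) ∣ (M.submatrix rows cols).det :=
  prime_pow_dvd_minor_general n r p hp M hrank
end
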